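/- Let E = EuclideanSpace ℂ (Fin n) and F = EuclideanSpace ℂ (Fin m), A : E →L[ℂ] F with adjoint A† = ContinuousLinearMap.adjoint A, b ∈ F, g : E → ℝ convex with respect to the real scalar structure, p : Polynomial ℝ, and P = p(A† ∘L A) the polynomial preconditioner. Suppose y⋆ ∈ E minimizes z ↦ (1/2)‖z − (y⋆ − P (A† (A y⋆ − b)))‖² + g z over E, and for some ŷ ∈ E the point y⁺ minimizes z ↦ (1/2)‖z − (ŷ − P (A† (A ŷ − b)))‖² + g z over E. Write ŷ − y⋆ = s + t with s ∈ ker A and t in the orthogonal complement of ker A. Then ‖y⁺ − y⋆‖² ≤ ‖(ContinuousLinearMap.id − P ∘L (A† ∘L A)) t‖² + ‖s‖². (Null-space split of the preconditioned PGD error bound, equation (2.27).) -/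

import Mathlib

open RCLike ContinuousLinearMap

lemma prox_subgrad {E : Type*} [NormedAddCommGroup E] [InnerProductSpace ℂ E]
    (g : E → ℝ) (hg : ConvexOn ℝ Set.univ g) (v u : E)
    (hmin : ∀ z : E, (1/2) * ‖u - v‖^2 + g u ≤ (1/2) * ‖z - v‖^2 + g z)
    (z : E) : 0 ≤ re (inner ℂ (u - v) (z - u) : ℂ) + (g z - g u) := by
  have key : ∀ θ : ℝ, 0 < θ → θ ≤ 1 →
      0 ≤ re (inner ℂ (u - v) (z - u) : ℂ) + (g z - g u) + θ / 2 * ‖z - u‖^2 := by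
    intro θ hθ0 hθ1
    have h := hmin (u + θ • (z - u))
    have hnorm : ‖u + θ • (z - u) - v‖^2
        = ‖u - v‖^2 + θ * (2 * re (inner ℂ (u - v) (z - u) : ℂ)) + θ^2 * ‖z - u‖^2 := by
      have h1 : u + θ • (z - u) - v = (u - v) + θ • (z - u) := by abel
      have h2 : θ • (z - u) = ((θ:ℂ)) • (z - u) := by
        simp [Complex.coe_smul]
      rw [h1, norm_add_sq (𝕜 := ℂ), h2, inner_smul_right, norm_smul]
      simp only [RCLike.re_ofReal_mul, Complex.norm_real, Real.norm_eq_abs, abs_of_pos hθ0, mul_pow]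
      rw [show re ((θ:ℂ) * inner ℂ (u - v) (z - u)) = θ * re (inner ℂ (u - v) (z - u)) from RCLike.re_ofReal_mul _ _]
      ring
    have heq : (1 - θ) • u + θ • z = u + θ • (z - u) := by
      rw [smul_sub, sub_smul, one_smul]; abel
    have hconv : g (u + θ • (z - u)) ≤ (1 - θ) * g u + θ * g z := by
      have := hg.2 (Set.mem_univ u) (Set.mem_univ z)
        (by linarith : (0:ℝ) ≤ 1 - θ) (le_of_lt hθ0) (by ring)
      rwa [heq] at this
    nlinarith [h, hnorm, hconv]
  by_contra hc
  push_neg at hc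
  set c := re (inner ℂ (u - v) (z - u) : ℂ) + (g z - g u) with hcdef
  set d := ‖z - u‖^2 with hddef
  have hd : 0 ≤ d := sq_nonneg _
  rcases eq_or_lt_of_le hd with hd0 | hd0
  · have := key 1 one_pos le_rfl
    rw [← hd0] at this
    simp at this
    linarith
  · have hθ0 : 0 < min 1 (-c / d) := lt_min one_pos (div_pos (neg_pos.mpr hc) hd0)
    have h1 : min 1 (-c / d) ≤ 1 := min_le_left _ _
    have h2 : min 1 (-c / d) ≤ -c / d := min_le_right _ _
    have := key _ hθ0 h1
    have h3 : min 1 (-c / d) * d ≤ -c := by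
      calc min 1 (-c/d) * d ≤ (-c/d) * d := mul_le_mul_of_nonneg_right h2 hd
        _ = -c := by field_simp
    nlinarith

lemma prox_nonexpansive {E : Type*} [NormedAddCommGroup E] [InnerProductSpace ℂ E]
    (g : E → ℝ) (hg : ConvexOn ℝ Set.univ g) (v1 v2 u1 u2 : E)
    (hmin1 : ∀ z : E, (1/2) * ‖u1 - v1‖^2 + g u1 ≤ (1/2) * ‖z - v1‖^2 + g z)
    (hmin2 : ∀ z : E, (1/2) * ‖u2 - v2‖^2 + g u2 ≤ (1/2) * ‖z - v2‖^2 + g z) :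
    ‖u1 - u2‖ ≤ ‖v1 - v2‖ := by
  have h1 := prox_subgrad g hg v1 u1 hmin1 u2
  have h2 := prox_subgrad g hg v2 u2 hmin2 u1
  have e : (inner ℂ (u1 - v1) (u2 - u1) : ℂ) + inner ℂ (u2 - v2) (u1 - u2)
      = inner ℂ (v1 - v2) (u1 - u2) - inner ℂ (u1 - u2) (u1 - u2) := by
    simp only [inner_sub_left, inner_sub_right]
    ring
  have hre : re ((inner ℂ (u1 - v1) (u2 - u1) : ℂ) + inner ℂ (u2 - v2) (u1 - u2))
      = re (inner ℂ (v1 - v2) (u1 - u2) : ℂ) - ‖u1 - u2‖^2 := by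
    rw [e, map_sub, @inner_self_eq_norm_sq ℂ]
  have hsq : ‖u1 - u2‖^2 ≤ re (inner ℂ (v1 - v2) (u1 - u2) : ℂ) := by
    have := map_add re (inner ℂ (u1 - v1) (u2 - u1) : ℂ) (inner ℂ (u2 - v2) (u1 - u2))
    rw [hre] at this
    linarith [h1, h2, this.symm ▸ (by linarith [h1, h2] :
      (0:ℝ) ≤ re (inner ℂ (u1 - v1) (u2 - u1) : ℂ) + re (inner ℂ (u2 - v2) (u1 - u2) : ℂ))]
  have hb := re_inner_le_norm (𝕜 := ℂ) (v1 - v2) (u1 - u2)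
  nlinarith [norm_nonneg (u1 - u2), norm_nonneg (v1 - v2)]

open RCLike ContinuousLinearMap

lemma adjoint_comp_mem_orth {n m : ℕ}
    (A : EuclideanSpace ℂ (Fin n) →L[ℂ] EuclideanSpace ℂ (Fin m))
    (x : EuclideanSpace ℂ (Fin n)) :
    (ContinuousLinearMap.adjoint A) (A x) ∈ (LinearMap.ker (A : EuclideanSpace ℂ (Fin n) →ₗ[ℂ] EuclideanSpace ℂ (Fin m)))ᗮ := by
  rw [Submodule.mem_orthogonal]
  intro u hu
  rw [ContinuousLinearMap.adjoint_inner_right]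
  have : A u = 0 := hu
  simp [this]

lemma pow_mem_orth {n m : ℕ}
    (A : EuclideanSpace ℂ (Fin n) →L[ℂ] EuclideanSpace ℂ (Fin m))
    (k : ℕ) (x : EuclideanSpace ℂ (Fin n)) (hx : x ∈ (LinearMap.ker (A : EuclideanSpace ℂ (Fin n) →ₗ[ℂ] EuclideanSpace ℂ (Fin m)))ᗮ) :
    (((ContinuousLinearMap.adjoint A).comp A) ^ k) x ∈ (LinearMap.ker (A : EuclideanSpace ℂ (Fin n) →ₗ[ℂ] EuclideanSpace ℂ (Fin m)))ᗮ := by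
  induction k generalizing x with
  | zero => simpa using hx
  | succ k ih =>
    have : (((ContinuousLinearMap.adjoint A).comp A) ^ (k+1)) x
        = (((ContinuousLinearMap.adjoint A).comp A) ^ k)
            (((ContinuousLinearMap.adjoint A).comp A) x) := by
      rw [pow_succ, ContinuousLinearMap.mul_apply]
    rw [this]
    exact ih _ (adjoint_comp_mem_orth A x)

lemma aeval_mem_orth {n m : ℕ}
    (A : EuclideanSpace ℂ (Fin n) →L[ℂ] EuclideanSpace ℂ (Fin m))
    (q : Polynomial ℂ) (x : EuclideanSpace ℂ (Fin n)) (hx : x ∈ (LinearMap.ker (A : EuclideanSpace ℂ (Fin n) →ₗ[ℂ] EuclideanSpace ℂ (Fin m)))ᗮ) :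
    (Polynomial.aeval ((ContinuousLinearMap.adjoint A).comp A) q) x
      ∈ (LinearMap.ker (A : EuclideanSpace ℂ (Fin n) →ₗ[ℂ] EuclideanSpace ℂ (Fin m)))ᗮ := by
  induction q using Polynomial.induction_on' with
  | add q1 q2 h1 h2 =>
    rw [map_add, ContinuousLinearMap.add_apply]
    exact Submodule.add_mem _ h1 h2
  | monomial k c =>
    rw [Polynomial.aeval_monomial, ContinuousLinearMap.mul_apply,
      Algebra.algebraMap_eq_smul_one, ContinuousLinearMap.smul_apply,
      ContinuousLinearMap.one_apply]
    exact Submodule.smul_mem _ _ (pow_mem_orth A k x hx)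


/-- Null-space split of the preconditioned PGD error bound (equation (2.27)). -/
theorem preconditioned_pgd_error_nullspace_split (n m : ℕ)
    (A : EuclideanSpace ℂ (Fin n) →L[ℂ] EuclideanSpace ℂ (Fin m))
    (b : EuclideanSpace ℂ (Fin m))
    (g : EuclideanSpace ℂ (Fin n) → ℝ) (hg : ConvexOn ℝ Set.univ g)
    (p : Polynomial ℝ)
    (P : EuclideanSpace ℂ (Fin n) →L[ℂ] EuclideanSpace ℂ (Fin n))
    (hP : P = Polynomial.aeval
      ((ContinuousLinearMap.adjoint A).comp A) (p.map (algebraMap ℝ ℂ)))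
    (ystar yhat yplus : EuclideanSpace ℂ (Fin n))
    (hstar : ∀ z : EuclideanSpace ℂ (Fin n),
      (1/2) * ‖ystar - (ystar - P ((ContinuousLinearMap.adjoint A) (A ystar - b)))‖^2
          + g ystar ≤
      (1/2) * ‖z - (ystar - P ((ContinuousLinearMap.adjoint A) (A ystar - b)))‖^2 + g z)
    (hplus : ∀ z : EuclideanSpace ℂ (Fin n),
      (1/2) * ‖yplus - (yhat - P ((ContinuousLinearMap.adjoint A) (A yhat - b)))‖^2
          + g yplus ≤
      (1/2) * ‖z - (yhat - P ((ContinuousLinearMap.adjoint A) (A yhat - b)))‖^2 + g z)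
    (s t : EuclideanSpace ℂ (Fin n))
    (hs : s ∈ LinearMap.ker (A : EuclideanSpace ℂ (Fin n) →ₗ[ℂ] EuclideanSpace ℂ (Fin m))) (ht : t ∈ (LinearMap.ker (A : EuclideanSpace ℂ (Fin n) →ₗ[ℂ] EuclideanSpace ℂ (Fin m)))ᗮ)
    (hst : yhat - ystar = s + t) :
    ‖yplus - ystar‖^2 ≤
      ‖(ContinuousLinearMap.id ℂ (EuclideanSpace ℂ (Fin n))
        - P.comp ((ContinuousLinearMap.adjoint A).comp A)) t‖^2 + ‖s‖^2 := by
  set Ad := ContinuousLinearMap.adjoint A with hAd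
  set v1 : EuclideanSpace ℂ (Fin n) := ystar - P (Ad (A ystar - b)) with hv1
  set v2 : EuclideanSpace ℂ (Fin n) := yhat - P (Ad (A yhat - b)) with hv2
  set z : EuclideanSpace ℂ (Fin n) := t - P (Ad (A t)) with hz
  -- the applied operator equals z
  have hzeq : (ContinuousLinearMap.id ℂ (EuclideanSpace ℂ (Fin n))
      - P.comp ((ContinuousLinearMap.adjoint A).comp A)) t = z := by
    simp [ContinuousLinearMap.sub_apply, ContinuousLinearMap.comp_apply,
      ContinuousLinearMap.id_apply, hz, hAd]
  -- difference of the gradient points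
  have hAs : A s = 0 := hs
  have hAdiff : A yhat - b - (A ystar - b) = A t := by
    have h1 : A yhat - A ystar = A t := by
      rw [← map_sub, hst, map_add, hAs, zero_add]
    rw [← h1]; abel
  have hv21 : v2 - v1 = s + z := by
    have h2 : P (Ad (A yhat - b)) - P (Ad (A ystar - b)) = P (Ad (A t)) := by
      rw [← map_sub, ← map_sub, hAdiff]
    have : v2 - v1 = (yhat - ystar) - (P (Ad (A yhat - b)) - P (Ad (A ystar - b))) := by
      rw [hv1, hv2]; abel
    rw [this, h2, hst, hz]; abel
  -- z lies in the orthogonal complement of ker A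
  have hzK : z ∈ (LinearMap.ker (A : EuclideanSpace ℂ (Fin n) →ₗ[ℂ] EuclideanSpace ℂ (Fin m)))ᗮ := by
    rw [hz]
    refine Submodule.sub_mem _ ht ?_
    rw [hP, hAd]
    exact aeval_mem_orth A _ _ (adjoint_comp_mem_orth A t)
  -- Pythagoras
  have hinner : (inner ℂ s z : ℂ) = 0 := (Submodule.mem_orthogonal _ _).1 hzK s hs
  have hpyth : ‖s + z‖^2 = ‖z‖^2 + ‖s‖^2 := by
    rw [norm_add_sq (𝕜 := ℂ), hinner]
    simp
    ring
  -- nonexpansiveness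
  have hne : ‖ystar - yplus‖ ≤ ‖v1 - v2‖ :=
    prox_nonexpansive g hg v1 v2 ystar yplus hstar hplus
  have h1 : ‖yplus - ystar‖ = ‖ystar - yplus‖ := norm_sub_rev _ _
  have h2 : ‖v1 - v2‖ = ‖v2 - v1‖ := norm_sub_rev _ _
  have h3 : ‖yplus - ystar‖ ≤ ‖s + z‖ := by
    rw [h1, ← hv21]; rw [h2] at hne; exact hne
  calc ‖yplus - ystar‖^2 ≤ ‖s + z‖^2 :=
        pow_le_pow_left₀ (norm_nonneg _) h3 2
    _ = ‖z‖^2 + ‖s‖^2 := hpyth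
    _ = ‖(ContinuousLinearMap.id ℂ (EuclideanSpace ℂ (Fin n))
          - P.comp ((ContinuousLinearMap.adjoint A).comp A)) t‖^2 + ‖s‖^2 := by
        rw [hzeq]
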